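/- arXiv:1912.06956 — 4 statements merged into one kernel-verified Lean document; each statement's English description precedes it below -/
import Mathlib

section
/- Let θ ∈ [0,1], α ∈ ℝ, and let (W_j)_{j∈ℤ} be a sequence with values in {−1,1} such that sup{j : W_j = 1} = sup{j : W_j = −1} = ∞. Define G_j := W_j if (α − Σ_{k<j} W_k·2^{k+θ-1} + 2^{j+θ-1}) mod 2^{j+θ+1} ∈ [0, 2^{j+θ}), and G_j := −W_j otherwise. Then there exists j₀ ∈ ℤ such that G_j = W_j for all j ≥ j₀. -/
open Real

/-- `a mod b := a - b * ⌊a / b⌋` for real numbers. -/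
noncomputable def realMod (a b : ℝ) : ℝ := a - b * ⌊a / b⌋

/-!
Write `c_j = 2^(j+θ-1)` and `Y_j = α - ∑_{k<j} W_k c_k + c_j` for the number reduced modulo
`2^(j+θ+1)`. Since `∑_{k<j} c_k = c_j`, we have `α ≤ Y_j ≤ α + 2 c_j` and
`Y_{j+1} = Y_j + (1 - W_j) c_j`. Once `0 ≤ Y_j < 2 c_j` for one `j`, this persists for all
larger `j` (as `c_{j+1} = 2 c_j`), and then `Y_j mod 2^(j+θ+1) = Y_j`, so `G_j = W_j`.
A starting index is found at a `-1` of `W` (which pushes `Y` above `0` for good) followed by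
a later `+1` (where `Y_{j+1} = Y_j ≤ α + 2 c_j < 2 c_{j+1}`).
-/

lemma realMod_eq_self {a b : ℝ} (ha : 0 ≤ a) (hab : a < b) : realMod a b = a := by
  have hb : 0 < b := ha.trans_lt hab
  rw [realMod, Int.floor_eq_zero_iff.mpr ⟨div_nonneg ha hb.le, (div_lt_one hb).mpr hab⟩]
  simp

lemma two_rpow_eq_two_mul_rpow_sub_one (x : ℝ) : (2:ℝ) ^ x = 2 * (2:ℝ) ^ (x - 1) := by
  rw [rpow_sub_one two_ne_zero]
  ring

lemma two_rpow_intCast_add_one_add (j : ℤ) (θ : ℝ) :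
    (2:ℝ) ^ (((j + 1 : ℤ) : ℝ) + θ) = 2 * (2:ℝ) ^ ((j:ℝ) + θ) := by
  rw [two_rpow_eq_two_mul_rpow_sub_one]
  push_cast
  ring_nf

lemma eventually_lt_two_rpow (θ x : ℝ) : ∀ᶠ j : ℤ in Filter.atTop, x < (2:ℝ) ^ ((j:ℝ) + θ) :=
  ((tendsto_rpow_atTop_of_base_gt_one 2 one_lt_two).comp
    (Filter.tendsto_atTop_add_const_right _ θ tendsto_intCast_atTop_atTop)).eventually_gt_atTop x

lemma hasSum_two_rpow_of_lt (θ : ℝ) (j : ℤ) :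
    HasSum (fun k : ℤ => if k < j then (2:ℝ) ^ ((k:ℝ) + θ - 1) else 0)
      ((2:ℝ) ^ ((j:ℝ) + θ - 1)) := by
  have hinj : Function.Injective (fun n : ℕ => j - 1 - (n:ℤ)) := fun a b h => by simpa using h
  have hrange : ∀ k, k ∉ Set.range (fun n : ℕ => j - 1 - (n:ℤ)) →
      (if k < j then (2:ℝ) ^ ((k:ℝ) + θ - 1) else 0) = 0 := fun k hk => by
    rw [if_neg]
    rintro hkj
    exact hk ⟨(j - 1 - k).toNat, by dsimp only; omega⟩
  rw [← hinj.hasSum_iff hrange]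
  convert hasSum_geometric_two' ((2:ℝ) ^ ((j:ℝ) + θ - 1)) using 1
  funext n
  rw [Function.comp_apply, if_pos (by omega), div_div, ← pow_succ', ← Real.rpow_natCast,
    ← Real.rpow_sub two_pos]
  push_cast
  ring_nf

noncomputable def weightedSumBelow (θ : ℝ) (W : ℤ → ℝ) (j : ℤ) : ℝ :=
  ∑' k : ℤ, if k < j then W k * (2:ℝ) ^ ((k:ℝ) + θ - 1) else 0

section WeightedSum

variable (θ : ℝ) {W : ℤ → ℝ}

lemma abs_weightedTerm_le (hW : ∀ k, |W k| ≤ 1) (j k : ℤ) :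
    |if k < j then W k * (2:ℝ) ^ ((k:ℝ) + θ - 1) else 0|
      ≤ if k < j then (2:ℝ) ^ ((k:ℝ) + θ - 1) else 0 := by
  split_ifs
  · rw [abs_mul, abs_of_pos (rpow_pos_of_pos two_pos _)]
    exact mul_le_of_le_one_left (rpow_pos_of_pos two_pos _).le (hW k)
  · simp

lemma summable_weightedTerm (hW : ∀ k, |W k| ≤ 1) (j : ℤ) :
    Summable (fun k : ℤ => if k < j then W k * (2:ℝ) ^ ((k:ℝ) + θ - 1) else 0) :=
  (hasSum_two_rpow_of_lt θ j).summable.of_norm_bounded (abs_weightedTerm_le θ hW j)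

lemma abs_weightedSumBelow_le (hW : ∀ k, |W k| ≤ 1) (j : ℤ) :
    |weightedSumBelow θ W j| ≤ (2:ℝ) ^ ((j:ℝ) + θ - 1) := by
  have hsum := (summable_weightedTerm θ hW j).hasSum
  have hc := hasSum_two_rpow_of_lt θ j
  rw [abs_le]
  constructor
  · exact hasSum_le (fun k => neg_le_of_abs_le (abs_weightedTerm_le θ hW j k)) hc.neg hsum
  · exact hasSum_le (fun k => le_of_abs_le (abs_weightedTerm_le θ hW j k)) hsum hc

lemma weightedSumBelow_succ (hW : ∀ k, |W k| ≤ 1) (j : ℤ) :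
    weightedSumBelow θ W (j + 1) = weightedSumBelow θ W j + W j * (2:ℝ) ^ ((j:ℝ) + θ - 1) := by
  have hsplit : (fun k : ℤ => if k < j + 1 then W k * (2:ℝ) ^ ((k:ℝ) + θ - 1) else 0)
      = fun k => (if k < j then W k * (2:ℝ) ^ ((k:ℝ) + θ - 1) else 0)
        + (if k = j then W j * (2:ℝ) ^ ((j:ℝ) + θ - 1) else 0) := by
    funext k
    rcases lt_trichotomy k j with h | rfl | h
    · simp [h, h.trans (lt_add_one j), h.ne]
    · simp
    · simp [h.not_gt, h.ne', (Int.lt_add_one_iff.not.mpr h.not_ge)]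
  rw [weightedSumBelow, hsplit,
    (summable_weightedTerm θ hW j).tsum_add (hasSum_ite_eq j _).summable,
    (hasSum_ite_eq j _).tsum_eq, weightedSumBelow]

end WeightedSum

noncomputable def modArgument (θ α : ℝ) (W : ℤ → ℝ) (j : ℤ) : ℝ :=
  α - weightedSumBelow θ W j + (2:ℝ) ^ ((j:ℝ) + θ - 1)

section ModArgument

variable (θ α : ℝ) {W : ℤ → ℝ}

lemma modArgument_succ (hW : ∀ k, |W k| ≤ 1) (j : ℤ) :
    modArgument θ α W (j + 1)
      = modArgument θ α W j + (1 - W j) * (2:ℝ) ^ ((j:ℝ) + θ - 1) := by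
  have hexp : ((j + 1 : ℤ) : ℝ) + θ - 1 = ((j:ℝ) + θ - 1) + 1 := by push_cast; ring
  rw [modArgument, modArgument, weightedSumBelow_succ θ hW, hexp, rpow_add_one two_ne_zero]
  ring

lemma le_modArgument (hW : ∀ k, |W k| ≤ 1) (j : ℤ) : α ≤ modArgument θ α W j := by
  have := le_of_abs_le (abs_weightedSumBelow_le θ hW j)
  rw [modArgument]
  linarith

lemma modArgument_le (hW : ∀ k, |W k| ≤ 1) (j : ℤ) :
    modArgument θ α W j ≤ α + (2:ℝ) ^ ((j:ℝ) + θ) := by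
  have := neg_le_of_abs_le (abs_weightedSumBelow_le θ hW j)
  rw [modArgument, two_rpow_eq_two_mul_rpow_sub_one ((j:ℝ) + θ)]
  linarith

lemma modArgument_le_succ (hW : ∀ k, |W k| ≤ 1) (j : ℤ) :
    modArgument θ α W j ≤ modArgument θ α W (j + 1) := by
  rw [modArgument_succ θ α hW]
  have := le_of_abs_le (hW j)
  have := rpow_pos_of_pos two_pos ((j:ℝ) + θ - 1)
  nlinarith

lemma monotone_modArgument (hW : ∀ k, |W k| ≤ 1) : Monotone (modArgument θ α W) :=
  monotone_int_of_le_succ (modArgument_le_succ θ α hW)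

lemma modArgument_mem_Ico_of_le (hW : ∀ k, |W k| ≤ 1) {j₀ j : ℤ}
    (h₀ : modArgument θ α W j₀ ∈ Set.Ico 0 ((2:ℝ) ^ ((j₀:ℝ) + θ))) (hj : j₀ ≤ j) :
    modArgument θ α W j ∈ Set.Ico 0 ((2:ℝ) ^ ((j:ℝ) + θ)) := by
  induction j, hj using Int.leInduction with
  | base => exact h₀
  | succ j _ ih =>
    refine ⟨ih.1.trans (modArgument_le_succ θ α hW j), ?_⟩
    have hWj := neg_le_of_abs_le (hW j)
    have hc := rpow_pos_of_pos two_pos ((j:ℝ) + θ - 1)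
    have hY := ih.2
    rw [two_rpow_intCast_add_one_add, modArgument_succ θ α hW]
    rw [two_rpow_eq_two_mul_rpow_sub_one ((j:ℝ) + θ)] at hY ⊢
    nlinarith

lemma exists_modArgument_mem_Ico (hW : ∀ k, |W k| ≤ 1)
    (hWp : ∀ n : ℤ, ∃ j ≥ n, W j = 1) (hWm : ∀ n : ℤ, ∃ j ≥ n, W j = -1) :
    ∃ j₀ : ℤ, modArgument θ α W j₀ ∈ Set.Ico 0 ((2:ℝ) ^ ((j₀:ℝ) + θ)) := by
  obtain ⟨n₁, hn₁⟩ := Filter.eventually_atTop.mp (eventually_lt_two_rpow θ (-α))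
  obtain ⟨j₁, hj₁, hW₁⟩ := hWm n₁
  obtain ⟨n₂, hn₂⟩ := Filter.eventually_atTop.mp (eventually_lt_two_rpow θ α)
  obtain ⟨j₂, hj₂, hW₂⟩ := hWp (max (j₁ + 1) n₂)
  have hY₁ : 0 ≤ modArgument θ α W (j₁ + 1) := by
    have := le_modArgument θ α hW j₁
    have := hn₁ j₁ hj₁
    rw [modArgument_succ θ α hW, hW₁]
    rw [two_rpow_eq_two_mul_rpow_sub_one] at this
    linarith
  have hY₂ : modArgument θ α W (j₂ + 1) = modArgument θ α W j₂ := by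
    rw [modArgument_succ θ α hW, hW₂]
    ring
  refine ⟨j₂ + 1, ?_, ?_⟩
  · rw [hY₂]
    exact hY₁.trans (monotone_modArgument θ α hW ((le_max_left _ _).trans hj₂))
  · have := modArgument_le θ α hW j₂
    have := hn₂ j₂ ((le_max_right _ _).trans hj₂)
    rw [hY₂, two_rpow_intCast_add_one_add]
    linarith

end ModArgument

theorem stmt2_general (θ : ℝ) (α : ℝ) (W : ℤ → ℝ)
    (hW : ∀ j, W j = -1 ∨ W j = 1)
    (hWp : ∀ n : ℤ, ∃ j ≥ n, W j = 1) (hWm : ∀ n : ℤ, ∃ j ≥ n, W j = -1)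
    (G : ℤ → ℝ)
    (hG : ∀ j : ℤ, G j =
      if realMod (α - (∑' k : ℤ, if k < j then W k * (2:ℝ) ^ ((k:ℝ) + θ - 1) else 0)
            + (2:ℝ) ^ ((j:ℝ) + θ - 1)) ((2:ℝ) ^ ((j:ℝ) + θ + 1))
          ∈ Set.Ico (0:ℝ) ((2:ℝ) ^ ((j:ℝ) + θ))
        then W j else -W j) :
    ∃ j₀ : ℤ, ∀ j ≥ j₀, G j = W j := by
  have hW' : ∀ k, |W k| ≤ 1 := fun k => by rcases hW k with h | h <;> simp [h]
  obtain ⟨j₀, hj₀⟩ := exists_modArgument_mem_Ico θ α hW' hWp hWm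
  refine ⟨j₀, fun j hj => ?_⟩
  have hY := modArgument_mem_Ico_of_le θ α hW' hj₀ hj
  have hmod : realMod (modArgument θ α W j) ((2:ℝ) ^ ((j:ℝ) + θ + 1)) = modArgument θ α W j :=
    realMod_eq_self hY.1 (hY.2.trans (rpow_lt_rpow_of_exponent_lt one_lt_two (lt_add_one _)))
  rw [hG j, if_pos]
  exact hmod ▸ hY

theorem stmt2 (θ : ℝ) (hθ : θ ∈ Set.Icc (0:ℝ) 1) (α : ℝ) (W : ℤ → ℝ)
    (hW : ∀ j, W j = -1 ∨ W j = 1)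
    (hWp : ∀ n : ℤ, ∃ j ≥ n, W j = 1) (hWm : ∀ n : ℤ, ∃ j ≥ n, W j = -1)
    (G : ℤ → ℝ)
    (hG : ∀ j : ℤ, G j =
      if realMod (α - (∑' k : ℤ, if k < j then W k * (2:ℝ) ^ ((k:ℝ) + θ - 1) else 0)
            + (2:ℝ) ^ ((j:ℝ) + θ - 1)) ((2:ℝ) ^ ((j:ℝ) + θ + 1))
          ∈ Set.Ico (0:ℝ) ((2:ℝ) ^ ((j:ℝ) + θ))
        then W j else -W j) :
    ∃ j₀ : ℤ, ∀ j ≥ j₀, G j = W j :=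
  stmt2_general θ α W hW hWp hWm G hG
end

section
/- Let θ ∈ [0,1], α ∈ ℝ, and let (W_j)_{j∈ℤ} be a sequence with values in {−1,1} such that sup{j : W_j = 1} = sup{j : W_j = −1} = ∞. Define G_j := W_j if (α − Σ_{k<j} W_k·2^{k+θ-1} + 2^{j+θ-1}) mod 2^{j+θ+1} ∈ [0, 2^{j+θ}), and G_j := −W_j otherwise. Then Σ_{j∈ℤ} (W_j − G_j)·2^{j+θ-1} = α. -/
/-!
Write `s j = c * 2 ^ j` with `c = 2 ^ (θ - 1)`, and let `level j = α - ∑_{k<j} W k * s k + s j` be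
the number reduced in the definition of `G j`, so that `level (j + 1) = level j + (1 - W j) * s j`.
Round `level j` down to a multiple `roundedLevel j` of `2 * s j`. The condition on
`level j mod 4 s j` says that the quotient `⌊level j / (2 s j)⌋` is even, and the four cases
(parity, sign of `W j`) give `roundedLevel j - roundedLevel (j + 1) = (W j - G j) * s j`. So the
series telescopes: `roundedLevel j → α` as `j → -∞` because the partial sums are bounded by `s j`,
and `roundedLevel j = 0` for large `j`, because `level` is monotone, `level - 2 s` is antitone, and
a step with `W j = -1` (resp. `W j = 1`) moves `level` up (resp. `level - 2 s` down) by `2 s j`.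
-/

open Real

open Filter Topology Set

theorem Summable.hasSum_sub_add_one_of_tendsto {E : Type*} [AddCommGroup E] [TopologicalSpace E]
    [IsTopologicalAddGroup E] [T2Space E] {φ : ℤ → E} {a b : E}
    (hs : Summable fun j => φ j - φ (j + 1)) (ha : Tendsto φ atBot (𝓝 a))
    (hb : Tendsto φ atTop (𝓝 b)) : HasSum (fun j => φ j - φ (j + 1)) (a - b) := by
  have hsum : ∀ m n : ℤ, m ≤ n → ∑ j ∈ Finset.Ico m n, (φ j - φ (j + 1)) = φ m - φ n := by
    intro m n hmn
    induction n, hmn using Int.leInduction with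
    | base => simp
    | succ n hmn ih => rw [← Finset.sum_Ico_add_eq_sum_Ico_add_one hmn, ih]; abel
  have hlim : Tendsto (fun p : ℤ × ℤ => ∑ j ∈ Finset.Ico p.1 p.2, (φ j - φ (j + 1)))
      (atBot ×ˢ atTop) (𝓝 (a - b)) := by
    refine ((ha.comp tendsto_fst).sub (hb.comp tendsto_snd)).congr' ?_
    filter_upwards [(eventually_le_atBot 0).prod_mk (eventually_ge_atTop 0)] with p hp
    exact (hsum p.1 p.2 (hp.1.trans hp.2)).symm
  rw [← tendsto_nhds_unique (hs.hasSum.comp Finset.tendsto_Ico_atBot_prod_atTop) hlim]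
  exact hs.hasSum

theorem tendsto_two_zpow_atBot : Tendsto (fun j : ℤ => (2 : ℝ) ^ j) atBot (𝓝 0) := by
  simpa only [Function.comp_def, id, Real.rpow_intCast] using
    (tendsto_rpow_atBot_of_base_gt_one 2 one_lt_two).comp
      (tendsto_intCast_atBot_iff.2 tendsto_id)

theorem tendsto_two_zpow_atTop : Tendsto (fun j : ℤ => (2 : ℝ) ^ j) atTop atTop := by
  simpa only [Function.comp_def, Real.rpow_intCast] using
    (tendsto_rpow_atTop_of_base_gt_one 2 one_lt_two).comp tendsto_intCast_atTop_atTop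

theorem hasSum_zpow_two_ite_lt (j : ℤ) :
    HasSum (fun k : ℤ => if k < j then (2 : ℝ) ^ k else 0) (2 ^ j) := by
  have hinj : Function.Injective fun n : ℕ => j - 1 - n := fun m n h => by simpa using h
  rw [← hinj.hasSum_iff fun k hk => if_neg fun hkj => hk ⟨(j - 1 - k).toNat, by simp; omega⟩]
  have hgeom := hasSum_geometric_two.mul_left ((2 : ℝ) ^ (j - 1))
  rw [← zpow_add_one₀ two_ne_zero, sub_add_cancel] at hgeom
  refine hgeom.congr_fun fun n => ?_
  simp only [Function.comp_apply, if_pos (by omega : j - 1 - (n : ℤ) < j)]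
  rw [zpow_sub₀ two_ne_zero, zpow_natCast, one_div, inv_pow, div_eq_mul_inv]

theorem Int.floor_div_two_mul (a b : ℝ) : ⌊a / (2 * b)⌋ = ⌊a / b⌋ / 2 := by
  rw [show a / (2 * b) = a / b / 2 by ring]
  simpa using Int.floor_div_natCast (a / b) 2

theorem realMod_mem_Ico {b : ℝ} (hb : 0 < b) (a : ℝ) : realMod a b ∈ Ico 0 b := by
  have hfract : realMod a b = b * Int.fract (a / b) := by
    rw [realMod, ← Int.self_sub_floor]; field_simp
  rw [hfract]
  exact ⟨by have := Int.fract_nonneg (a / b); positivity,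
    mul_lt_of_lt_one_right hb (Int.fract_lt_one _)⟩

theorem realMod_two_mul_mem_Ico_iff {a b : ℝ} (hb : 0 < b) :
    realMod a (2 * b) ∈ Ico 0 b ↔ Even ⌊a / b⌋ := by
  obtain ⟨hlo, hhi⟩ := realMod_mem_Ico hb a
  rw [realMod] at hlo hhi
  rw [realMod, Int.floor_div_two_mul]
  rcases Int.even_or_odd' ⌊a / b⌋ with ⟨k, hk | hk⟩ <;> rw [hk] at hlo hhi ⊢
  · simp only [Int.mul_ediv_cancel_left _ two_ne_zero, even_two_mul, iff_true, Set.mem_Ico]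
    push_cast at hlo hhi ⊢; constructor <;> linarith
  · rw [show (2 * k + 1) / 2 = k by omega]
    simp only [Int.not_even_two_mul_add_one, iff_false, Set.mem_Ico, not_and, not_lt]
    push_cast at hlo hhi ⊢; intro; linarith

namespace DyadicRecoding

variable (c α : ℝ) (W : ℤ → ℝ)

noncomputable def partialSum (j : ℤ) : ℝ := ∑' k : ℤ, if k < j then W k * (c * 2 ^ k) else 0

noncomputable def level (j : ℤ) : ℝ := α - partialSum c W j + c * 2 ^ j

noncomputable def levelFloor (j : ℤ) : ℤ := ⌊level c α W j / (2 * c * 2 ^ j)⌋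

noncomputable def roundedLevel (j : ℤ) : ℝ := 2 * c * 2 ^ j * levelFloor c α W j

noncomputable def recode (j : ℤ) : ℝ :=
  if realMod (level c α W j) (2 * (2 * c * 2 ^ j)) ∈ Ico 0 (2 * c * 2 ^ j) then W j else -W j

variable {c α W}

theorem norm_partialSum_term_le (hc : 0 ≤ c) (hW : ∀ k, |W k| ≤ 1) (j k : ℤ) :
    ‖if k < j then W k * (c * 2 ^ k) else 0‖ ≤ c * if k < j then 2 ^ k else 0 := by
  split_ifs
  · rw [norm_mul, Real.norm_eq_abs, Real.norm_of_nonneg (by positivity)]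
    exact mul_le_of_le_one_left (by positivity) (hW k)
  · simp

theorem summable_partialSum_term (hc : 0 ≤ c) (hW : ∀ k, |W k| ≤ 1) (j : ℤ) :
    Summable fun k : ℤ => if k < j then W k * (c * 2 ^ k) else 0 :=
  .of_norm_bounded ((hasSum_zpow_two_ite_lt j).mul_left c).summable
    (norm_partialSum_term_le hc hW j)

theorem abs_partialSum_le (hc : 0 ≤ c) (hW : ∀ k, |W k| ≤ 1) (j : ℤ) :
    |partialSum c W j| ≤ c * 2 ^ j :=
  tsum_of_norm_bounded ((hasSum_zpow_two_ite_lt j).mul_left c) (norm_partialSum_term_le hc hW j)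

theorem partialSum_add_one (hc : 0 ≤ c) (hW : ∀ k, |W k| ≤ 1) (j : ℤ) :
    partialSum c W (j + 1) = partialSum c W j + W j * (c * 2 ^ j) := by
  have hsplit : (fun k : ℤ => if k < j + 1 then W k * (c * 2 ^ k) else 0) = fun k =>
      (if k < j then W k * (c * 2 ^ k) else 0) + if k = j then W j * (c * 2 ^ j) else 0 := by
    funext k
    rcases lt_trichotomy k j with hkj | rfl | hjk
    · simp [hkj, hkj.trans (lt_add_one j), hkj.ne]
    · simp
    · simp [hjk.ne', show ¬ k < j by omega, show ¬ k < j + 1 by omega]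
  rw [partialSum, hsplit,
    ((summable_partialSum_term hc hW j).hasSum.add (hasSum_ite_eq j _)).tsum_eq, partialSum]

theorem level_add_one (hc : 0 ≤ c) (hW : ∀ k, |W k| ≤ 1) (j : ℤ) :
    level c α W (j + 1) = level c α W j + (1 - W j) * (c * 2 ^ j) := by
  rw [level, level, partialSum_add_one hc hW, zpow_add_one₀ two_ne_zero]
  ring

theorem recode_eq_ite_even (hc : 0 < c) (j : ℤ) :
    recode c α W j = if Even (levelFloor c α W j) then W j else -W j :=
  if_congr (realMod_two_mul_mem_Ico_iff (by positivity)) rfl rfl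

theorem roundedLevel_sub_roundedLevel_add_one (hc : 0 < c) (hW : ∀ k, |W k| ≤ 1) {j : ℤ}
    (hWj : W j = -1 ∨ W j = 1) :
    roundedLevel c α W j - roundedLevel c α W (j + 1) = (W j - recode c α W j) * (c * 2 ^ j) := by
  have hfloor : levelFloor c α W (j + 1) =
      ⌊level c α W (j + 1) / (2 * c * 2 ^ j)⌋ / 2 := by
    rw [levelFloor, ← Int.floor_div_two_mul, zpow_add_one₀ two_ne_zero]; ring_nf
  rw [roundedLevel, roundedLevel, hfloor, recode_eq_ite_even hc, level_add_one hc.le hW]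
  obtain ⟨n, hn⟩ : ∃ n, levelFloor c α W j = n := ⟨_, rfl⟩
  rcases hWj with hw | hw <;> rw [hw]
  · have : ⌊(level c α W j + (1 - -1) * (c * 2 ^ j)) / (2 * c * 2 ^ j)⌋ = n + 1 := by
      rw [← hn, levelFloor, ← Int.floor_add_one]; congr 1; field_simp; ring
    rw [this, hn, zpow_add_one₀ two_ne_zero]
    rcases Int.even_or_odd' n with ⟨k, rfl | rfl⟩
    · rw [show (2 * k + 1) / 2 = k by omega, if_pos (even_two_mul k)]; push_cast; ring
    · rw [show (2 * k + 1 + 1) / 2 = k + 1 by omega, if_neg (Int.not_even_two_mul_add_one k)]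
      push_cast; ring
  · rw [sub_self, zero_mul, add_zero, ← levelFloor, hn, zpow_add_one₀ two_ne_zero]
    rcases Int.even_or_odd' n with ⟨k, rfl | rfl⟩
    · rw [show 2 * k / 2 = k by omega, if_pos (even_two_mul k)]; push_cast; ring
    · rw [show (2 * k + 1) / 2 = k by omega, if_neg (Int.not_even_two_mul_add_one k)]
      push_cast; ring

theorem roundedLevel_eq_level_sub_realMod (j : ℤ) :
    roundedLevel c α W j = level c α W j - realMod (level c α W j) (2 * c * 2 ^ j) := by
  rw [roundedLevel, levelFloor, realMod]; ring

theorem abs_roundedLevel_sub_le (hc : 0 < c) (hW : ∀ k, |W k| ≤ 1) (j : ℤ) :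
    |roundedLevel c α W j - α| ≤ 2 * c * 2 ^ j := by
  obtain ⟨hlo, hhi⟩ := realMod_mem_Ico (by positivity : (0 : ℝ) < 2 * c * 2 ^ j) (level c α W j)
  have hS := abs_le.1 (abs_partialSum_le hc.le hW j)
  have hlevel : level c α W j = α - partialSum c W j + c * 2 ^ j := rfl
  rw [roundedLevel_eq_level_sub_realMod, abs_le]
  constructor <;> linarith [hS.1, hS.2]

theorem tendsto_roundedLevel_atBot (hc : 0 < c) (hW : ∀ k, |W k| ≤ 1) :
    Tendsto (roundedLevel c α W) atBot (𝓝 α) := by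
  have hbound : Tendsto (fun j : ℤ => 2 * c * 2 ^ j) atBot (𝓝 0) := by
    simpa using tendsto_two_zpow_atBot.const_mul (2 * c)
  refine tendsto_iff_dist_tendsto_zero.2 (squeeze_zero (fun _ => dist_nonneg) (fun j => ?_) hbound)
  rw [Real.dist_eq]
  exact abs_roundedLevel_sub_le hc hW j

theorem roundedLevel_eq_zero (hc : 0 < c) {j : ℤ} (h0 : 0 ≤ level c α W j)
    (h1 : level c α W j < 2 * c * 2 ^ j) : roundedLevel c α W j = 0 := by
  have hm : (0 : ℝ) < 2 * c * 2 ^ j := by positivity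
  rw [roundedLevel, levelFloor, Int.floor_eq_zero_iff.2 ⟨div_nonneg h0 hm.le, (div_lt_one hm).2 h1⟩]
  simp

theorem monotone_level (hc : 0 ≤ c) (hW : ∀ k, |W k| ≤ 1) : Monotone (level c α W) := by
  refine monotone_int_of_le_succ fun j => ?_
  rw [level_add_one hc hW]
  have := (abs_le.1 (hW j)).2
  have : 0 ≤ c * 2 ^ j := by positivity
  nlinarith

theorem antitone_level_sub (hc : 0 ≤ c) (hW : ∀ k, |W k| ≤ 1) :
    Antitone fun j => level c α W j - 2 * c * 2 ^ j := by
  refine antitone_int_of_succ_le fun j => ?_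
  rw [level_add_one hc hW, zpow_add_one₀ two_ne_zero]
  have := (abs_le.1 (hW j)).1
  have : 0 ≤ c * 2 ^ j := by positivity
  nlinarith

theorem eventually_roundedLevel_eq_zero (hc : 0 < c) (hW : ∀ k, |W k| ≤ 1)
    (hWp : ∃ᶠ j in atTop, W j = 1) (hWm : ∃ᶠ j in atTop, W j = -1) :
    ∀ᶠ j in atTop, roundedLevel c α W j = 0 := by
  have hgrow : Tendsto (fun j : ℤ => c * 2 ^ j) atTop atTop :=
    tendsto_two_zpow_atTop.const_mul_atTop hc
  obtain ⟨j₀, ⟨hj₀, hbig₀⟩, hW₀⟩ := (((eventually_ge_atTop 0).and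
    (hgrow.eventually_ge_atTop (-level c α W 0))).and_frequently hWm).exists
  obtain ⟨j₁, ⟨hj₁, hbig₁⟩, hW₁⟩ := (((eventually_ge_atTop 0).and
    (hgrow.eventually_ge_atTop (level c α W 0))).and_frequently hWp).exists
  have hnonneg : 0 ≤ level c α W (j₀ + 1) := by
    have := monotone_level (α := α) hc.le hW hj₀
    rw [level_add_one hc.le hW, hW₀]
    have : 0 < c * 2 ^ j₀ := by positivity
    linarith [show (1 - -1) * (c * 2 ^ j₀) = 2 * (c * 2 ^ j₀) by ring]
  have hbelow : level c α W (j₁ + 1) - 2 * c * 2 ^ (j₁ + 1) < 0 := by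
    have hanti : level c α W j₁ - 2 * c * 2 ^ j₁ ≤ level c α W 0 - 2 * c := by
      simpa using antitone_level_sub (α := α) hc.le hW hj₁
    have : 0 < c * 2 ^ j₁ := by positivity
    rw [level_add_one hc.le hW, hW₁, zpow_add_one₀ two_ne_zero]
    linarith
  filter_upwards [eventually_ge_atTop (j₀ + 1), eventually_ge_atTop (j₁ + 1)] with j h₀ h₁
  exact roundedLevel_eq_zero hc (hnonneg.trans (monotone_level hc.le hW h₀))
    (sub_neg.1 ((antitone_level_sub hc.le hW h₁).trans_lt hbelow))

theorem summable_roundedLevel_sub_roundedLevel_add_one (hc : 0 < c)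
    (hW : ∀ k, W k = -1 ∨ W k = 1) {N : ℤ} (hN : ∀ j ≥ N, roundedLevel c α W j = 0) :
    Summable fun j => roundedLevel c α W j - roundedLevel c α W (j + 1) := by
  have hW1 : ∀ k, |W k| ≤ 1 := fun k => by rcases hW k with h | h <;> simp [h]
  refine .of_norm_bounded ((hasSum_zpow_two_ite_lt N).mul_left (2 * c)).summable fun j => ?_
  split_ifs with hj
  · have hdiff : ‖W j - recode c α W j‖ ≤ 2 := by
      rw [recode]
      split_ifs <;> rcases hW j with h | h <;> norm_num [h]
    rw [roundedLevel_sub_roundedLevel_add_one hc hW1 (hW j), norm_mul,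
      Real.norm_of_nonneg (by positivity : (0 : ℝ) ≤ c * 2 ^ j), mul_assoc]
    exact mul_le_mul_of_nonneg_right hdiff (by positivity)
  · rw [hN j (not_lt.1 hj), hN (j + 1) (by omega)]
    simp

theorem hasSum_sub_recode_mul (hc : 0 < c) (hW : ∀ k, W k = -1 ∨ W k = 1)
    (hWp : ∃ᶠ j in atTop, W j = 1) (hWm : ∃ᶠ j in atTop, W j = -1) :
    HasSum (fun j => (W j - recode c α W j) * (c * 2 ^ j)) α := by
  have hW1 : ∀ k, |W k| ≤ 1 := fun k => by rcases hW k with h | h <;> simp [h]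
  have hzero := eventually_roundedLevel_eq_zero (α := α) hc hW1 hWp hWm
  obtain ⟨N, hN⟩ := eventually_atTop.1 hzero
  simp_rw [← roundedLevel_sub_roundedLevel_add_one hc hW1 (hW _)]
  simpa using
    (summable_roundedLevel_sub_roundedLevel_add_one hc hW hN).hasSum_sub_add_one_of_tendsto
      (tendsto_roundedLevel_atBot hc hW1) (tendsto_nhds_of_eventually_eq hzero)

end DyadicRecoding

theorem stmt4_general (θ : ℝ) (α : ℝ) (W : ℤ → ℝ)
    (hW : ∀ j, W j = -1 ∨ W j = 1)
    (hWp : ∀ n : ℤ, ∃ j ≥ n, W j = 1) (hWm : ∀ n : ℤ, ∃ j ≥ n, W j = -1)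
    (G : ℤ → ℝ)
    (hG : ∀ j : ℤ, G j =
      if realMod (α - (∑' k : ℤ, if k < j then W k * (2:ℝ) ^ ((k:ℝ) + θ - 1) else 0)
            + (2:ℝ) ^ ((j:ℝ) + θ - 1)) ((2:ℝ) ^ ((j:ℝ) + θ + 1))
          ∈ Set.Ico (0:ℝ) ((2:ℝ) ^ ((j:ℝ) + θ))
        then W j else -W j) :
    ∑' j : ℤ, (W j - G j) * (2:ℝ) ^ ((j:ℝ) + θ - 1) = α := by
  set c : ℝ := 2 ^ (θ - 1)
  have hweight (j : ℤ) : (2 : ℝ) ^ ((j : ℝ) + θ - 1) = c * 2 ^ j := by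
    rw [add_sub_assoc, Real.rpow_add two_pos, Real.rpow_intCast, mul_comm]
  have hscale (j : ℤ) : (2 : ℝ) ^ ((j : ℝ) + θ) = 2 * c * 2 ^ j := by
    rw [mul_assoc, ← hweight, show (j : ℝ) + θ = (j + θ - 1) + 1 by ring, Real.rpow_add two_pos,
      Real.rpow_one, mul_comm, add_sub_cancel_right]
  have hscale' (j : ℤ) : (2 : ℝ) ^ ((j : ℝ) + θ + 1) = 2 * (2 * c * 2 ^ j) := by
    rw [Real.rpow_add two_pos, hscale, Real.rpow_one, mul_comm]
  have hGrecode : G = DyadicRecoding.recode c α W := funext fun j => by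
    simp only [hG j, hweight, hscale, hscale']
    rfl
  simp only [hweight, hGrecode]
  exact (DyadicRecoding.hasSum_sub_recode_mul (by positivity) hW (frequently_atTop.2 hWp)
    (frequently_atTop.2 hWm)).tsum_eq

theorem stmt4 (θ : ℝ) (hθ : θ ∈ Set.Icc (0:ℝ) 1) (α : ℝ) (W : ℤ → ℝ)
    (hW : ∀ j, W j = -1 ∨ W j = 1)
    (hWp : ∀ n : ℤ, ∃ j ≥ n, W j = 1) (hWm : ∀ n : ℤ, ∃ j ≥ n, W j = -1)
    (G : ℤ → ℝ)
    (hG : ∀ j : ℤ, G j =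
      if realMod (α - (∑' k : ℤ, if k < j then W k * (2:ℝ) ^ ((k:ℝ) + θ - 1) else 0)
            + (2:ℝ) ^ ((j:ℝ) + θ - 1)) ((2:ℝ) ^ ((j:ℝ) + θ + 1))
          ∈ Set.Ico (0:ℝ) ((2:ℝ) ^ ((j:ℝ) + θ))
        then W j else -W j) :
    ∑' j : ℤ, (W j - G j) * (2:ℝ) ^ ((j:ℝ) + θ - 1) = α :=
  stmt4_general θ α W hW hWp hWm G hG
end

section
/- Let ψ > 0 and define F(ζ) := ∫₀¹ min{ζ⁻¹·2^{−θ}·ψ, 1} dθ for ζ > 0. Then for every ζ > ψ/2, F is differentiable at ζ with F′(ζ) = −(ζ⁻²·ψ/ln 2)·(min{ζ·ψ⁻¹, 1} − 1/2). -/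
open Real intervalIntegral

/-!
The substitution `u = c b^{-θ}` turns `∫₀¹ min (c b^{-θ}) 1 dθ` into
`(log b)⁻¹ ∫_{c/b}^{c} (max u 1)⁻¹ du`, because `min u 1 = u / max u 1`.
The new integrand is continuous on all of `ℝ`, so the fundamental theorem of calculus
differentiates the right-hand side in `c` with no case distinction. The chain rule through
`c = ψ / z` gives the formula, since for `ζ > ψ / 2`
the lower-endpoint term `(max (c / 2) 1)⁻¹` equals `1`.
-/

section MinMaxOne

variable {K : Type*} [Field K] [LinearOrder K] [IsStrictOrderedRing K]

lemma min_one_eq_div_max_one (u : K) : min u 1 = u / max u 1 := by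
  rcases le_total u 1 with h | h
  · rw [min_eq_left h, max_eq_right h, div_one]
  · rw [min_eq_right h, max_eq_left h, div_self (by positivity)]

lemma inv_max_one_eq_min_inv_one {x : K} (hx : 0 < x) : (max x 1)⁻¹ = min x⁻¹ 1 := by
  rcases le_total x 1 with h | h
  · rw [max_eq_right h, inv_one, min_eq_right (one_le_inv₀ hx |>.2 h)]
  · rw [max_eq_left h, min_eq_left (inv_le_one_of_one_le₀ h)]

end MinMaxOne

lemma continuous_inv_max_one : Continuous fun u : ℝ => (max u 1)⁻¹ :=
  (continuous_id.max continuous_const).inv₀ fun _ => (lt_max_of_lt_right one_pos).ne'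

lemma hasDerivAt_integral_div_right {f : ℝ → ℝ} (hf : Continuous f) (b x : ℝ) :
    HasDerivAt (fun x => ∫ t in x / b..x, f t) (f x - f (x / b) / b) x := by
  have hsplit : (fun x => ∫ t in x / b..x, f t) =
      fun x => (∫ t in (0 : ℝ)..x, f t) - ∫ t in (0 : ℝ)..x / b, f t := by
    funext x
    rw [integral_interval_sub_left (hf.intervalIntegrable _ _) (hf.intervalIntegrable _ _)]
  have hupper := (hf.integral_hasStrictDerivAt 0 x).hasDerivAt
  have hlower := (hf.integral_hasStrictDerivAt 0 (x / b)).hasDerivAt.comp x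
    ((hasDerivAt_id x).div_const b)
  rw [hsplit]
  refine (hupper.sub hlower).congr_deriv ?_
  ring

theorem log_mul_integral_min_mul_rpow_neg {b : ℝ} (hb : 0 < b) (c : ℝ) :
    log b * ∫ θ in (0 : ℝ)..1, min (c * b ^ (-θ)) 1 = ∫ u in c / b..c, (max u 1)⁻¹ := by
  have hderiv : ∀ θ : ℝ, HasDerivAt (fun t => c * b ^ (-t)) (-log b * (c * b ^ (-θ))) θ := by
    intro θ
    refine (((hasStrictDerivAt_const_rpow hb (-θ)).hasDerivAt.comp θ
      (hasDerivAt_neg θ)).const_mul c).congr_deriv ?_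
    ring
  have hcont : Continuous fun θ : ℝ => -log b * (c * b ^ (-θ)) :=
    continuous_const.mul <|
      continuous_const.mul ((continuous_const_rpow hb.ne').comp continuous_neg)
  have hsubst := integral_comp_mul_deriv (a := 0) (b := 1) (fun θ _ => hderiv θ)
    hcont.continuousOn continuous_inv_max_one
  simp only [Function.comp_def, neg_zero, rpow_zero, mul_one, rpow_neg_one, ← div_eq_mul_inv]
    at hsubst
  rw [integral_symm c (c / b), ← hsubst, ← integral_const_mul, ← integral_neg]
  refine integral_congr fun θ _ => ?_
  rw [min_one_eq_div_max_one]
  ring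

theorem stmt7 (ψ : ℝ) (hψ : 0 < ψ) (ζ : ℝ) (hζ : ψ / 2 < ζ) :
    HasDerivAt (fun z : ℝ => ∫ θ in (0:ℝ)..1, min (z⁻¹ * (2:ℝ) ^ (-θ) * ψ) 1)
      (-((ζ ^ 2)⁻¹ * ψ / Real.log 2 * (min (ζ * ψ⁻¹) 1 - 1/2))) ζ := by
  have hζ0 : 0 < ζ := by linarith
  have hlog2 : log 2 ≠ 0 := (log_pos one_lt_two).ne'
  have hF : (fun z : ℝ => ∫ θ in (0:ℝ)..1, min (z⁻¹ * (2:ℝ) ^ (-θ) * ψ) 1) =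
      fun z => (∫ u in z⁻¹ * ψ / 2..z⁻¹ * ψ, (max u 1)⁻¹) / log 2 := by
    funext z
    rw [← log_mul_integral_min_mul_rpow_neg two_pos, mul_div_cancel_left₀ _ hlog2]
    simp only [mul_right_comm _ ψ]
  have hG := ((hasDerivAt_integral_div_right continuous_inv_max_one 2 (ζ⁻¹ * ψ)).comp ζ
    ((hasDerivAt_inv hζ0.ne').mul_const ψ)).div_const (log 2)
  have hlower : max (ζ⁻¹ * ψ / 2) 1 = 1 :=
    max_eq_right <| by rw [div_le_one two_pos, inv_mul_le_iff₀ hζ0]; linarith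
  rw [hF]
  refine hG.congr_deriv ?_
  rw [hlower, inv_max_one_eq_min_inv_one (by positivity), mul_inv, inv_inv]
  field_simp
end

section
/- The function γ ↦ erf(exp(γ)/√2) is concave on [0, ∞), where erf(x) := ∫_{−x}^{x} (e^{−t²}/√π) dt is the error function. -/
open Real

/-- The error function `erf x = ∫_{-x}^{x} e^{-t²}/√π dt`. -/
noncomputable def erf (x : ℝ) : ℝ := ∫ t in (-x)..x, Real.exp (-t ^ 2) / Real.sqrt π

/-!
The derivative of `γ ↦ erf (e^γ / √2)` is `√(2/π) · φ(e^γ)` with `φ x = x e^{-x²/2}`.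
Since `φ' x = (1 - x²) e^{-x²/2}`, `φ` decreases on `[1, ∞)`, and `e^γ ≥ 1` increases
with `γ ≥ 0`; so the derivative is antitone on `[0, ∞)` and the function is concave there.
-/

open Set

lemma hasDerivAt_erf (x : ℝ) : HasDerivAt erf (2 * (exp (-x ^ 2) / √π)) x := by
  set g : ℝ → ℝ := fun t => exp (-t ^ 2) / √π
  have hg : Continuous g := by fun_prop
  have hG : ∀ y, HasDerivAt (fun u => ∫ t in (0 : ℝ)..u, g t) (g y) y := fun y =>
    intervalIntegral.integral_hasDerivAt_right (hg.intervalIntegrable _ _)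
      (hg.stronglyMeasurableAtFilter _ _) hg.continuousAt
  have herf : erf = fun u => (∫ t in (0 : ℝ)..u, g t) - ∫ t in (0 : ℝ)..(-u), g t := by
    ext u
    exact (intervalIntegral.integral_interval_sub_left (hg.intervalIntegrable _ _)
      (hg.intervalIntegrable _ _)).symm
  rw [herf]
  refine ((hG x).sub ((hG (-x)).comp x (hasDerivAt_neg x))).congr_deriv ?_
  simp only [g, neg_sq]
  ring

lemma hasDerivAt_mul_exp_neg_sq_div_two (x : ℝ) :
    HasDerivAt (fun x => x * exp (-x ^ 2 / 2)) ((1 - x ^ 2) * exp (-x ^ 2 / 2)) x := by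
  have h : HasDerivAt (fun x : ℝ => -x ^ 2 / 2) (-x) x :=
    ((hasDerivAt_pow 2 x).neg.div_const 2).congr_deriv (by ring)
  refine ((hasDerivAt_id x).mul h.exp).congr_deriv ?_
  simp only [id]
  ring

lemma antitoneOn_mul_exp_neg_sq_div_two :
    AntitoneOn (fun x : ℝ => x * exp (-x ^ 2 / 2)) (Ici 1) := by
  refine antitoneOn_of_hasDerivWithinAt_nonpos (convex_Ici 1)
    (Continuous.continuousOn (by fun_prop))
    (fun x _ => (hasDerivAt_mul_exp_neg_sq_div_two x).hasDerivWithinAt) fun x hx => ?_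
  rw [interior_Ici, mem_Ioi] at hx
  exact mul_nonpos_of_nonpos_of_nonneg (by nlinarith) (exp_pos _).le

lemma hasDerivAt_erf_exp_div_sqrt_two (γ : ℝ) :
    HasDerivAt (fun γ => erf (exp γ / √2))
      (√2 / √π * (exp γ * exp (-exp γ ^ 2 / 2))) γ := by
  refine ((hasDerivAt_erf _).comp γ ((hasDerivAt_exp γ).div_const √2)).congr_deriv ?_
  rw [div_pow, sq_sqrt zero_le_two, neg_div]
  field_simp
  rw [sq_sqrt zero_le_two]

theorem stmt11 :
    ConcaveOn ℝ (Set.Ici (0:ℝ)) (fun γ : ℝ => erf (Real.exp γ / Real.sqrt 2)) := by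
  have hderiv := hasDerivAt_erf_exp_div_sqrt_two
  refine AntitoneOn.concaveOn_of_deriv (convex_Ici 0)
    (fun γ _ => (hderiv γ).continuousAt.continuousWithinAt)
    (fun γ _ => (hderiv γ).differentiableAt.differentiableWithinAt) ?_
  rw [interior_Ici]
  intro a ha b hb hab
  rw [(hderiv a).deriv, (hderiv b).deriv]
  have hφ := antitoneOn_mul_exp_neg_sq_div_two (one_le_exp (le_of_lt ha))
    (one_le_exp (le_of_lt hb)) (exp_le_exp.mpr hab)
  exact mul_le_mul_of_nonneg_left hφ (by positivity)
end
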